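/- arXiv:2311.16558 — 2 statements merged into one kernel-verified Lean document; each statement's English description precedes it below -/
import Mathlib

section
/- Let G be a Hausdorff topological group with identity element e. Then the following statements are equivalent: (1) 𝔉[G] is WSHD; (2) 𝔉[G] is OHD; (3) 𝔉[G] is UC; (4) 𝔉[G] is π-UC; (5) G is OHD; (6) G is UC; (7) G has no countable local base at e; (8) G is π-UC; (9) G has no countable local π-base at e. -/
open Filter Topology Set

/-- `x : ℕ → X` has no convergent subsequence. -/
def NoConvSubseq {X : Type*} [TopologicalSpace X] (x : ℕ → X) : Prop :=
  ∀ φ : ℕ → ℕ, StrictMono φ → ∀ y : X, ¬ Filter.Tendsto (x ∘ φ) Filter.atTop (nhds y)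

/-- Selectively highly divergent. -/
def SHD (X : Type*) [TopologicalSpace X] : Prop :=
  ∀ U : ℕ → Set X, (∀ n, IsOpen (U n)) → (∀ n, (U n).Nonempty) →
    ∃ x : ℕ → X, (∀ n, x n ∈ U n) ∧ NoConvSubseq x

/-- Weakly selectively highly divergent. -/
def WSHD (X : Type*) [TopologicalSpace X] : Prop :=
  ∀ U : ℕ → Set X, (∀ n, IsOpen (U n)) → (∀ n, (U n).Nonempty) →
    ∃ A : Set ℕ, A.Infinite ∧ ∃ x : ℕ → X, (∀ n ∈ A, x n ∈ U n) ∧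
      ∀ φ : ℕ → ℕ, StrictMono φ → (∀ n, φ n ∈ A) →
        ∀ y : X, ¬ Filter.Tendsto (x ∘ φ) Filter.atTop (nhds y)

/-- A sequence of nonempty open sets converges to a point. -/
def OpenSeqTendsto {X : Type*} [TopologicalSpace X] (U : ℕ → Set X) (x : X) : Prop :=
  ∀ V : Set X, IsOpen V → x ∈ V → ∃ m : ℕ, ∀ n ≥ m, U n ⊆ V

/-- Openly highly divergent: no sequence of nonempty open sets converges to a point. -/
def OHD (X : Type*) [TopologicalSpace X] : Prop :=
  ¬ ∃ (U : ℕ → Set X) (x : X),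
      (∀ n, IsOpen (U n)) ∧ (∀ n, (U n).Nonempty) ∧ OpenSeqTendsto U x

/-- `x` has a countable local (neighbourhood) base. -/
def HasCountableLocalBase {X : Type*} [TopologicalSpace X] (x : X) : Prop :=
  ∃ B : Set (Set X), B.Countable ∧ (∀ V ∈ B, IsOpen V ∧ x ∈ V) ∧
    ∀ U : Set X, IsOpen U → x ∈ U → ∃ V ∈ B, V ⊆ U

/-- `x` has a countable local π-base. -/
def HasCountableLocalPiBase {X : Type*} [TopologicalSpace X] (x : X) : Prop :=
  ∃ B : Set (Set X), B.Countable ∧ (∀ V ∈ B, IsOpen V ∧ V.Nonempty) ∧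
    ∀ U : Set X, IsOpen U → x ∈ U → ∃ V ∈ B, V ⊆ U

/-- UC: every point has uncountable character. -/
def UC (X : Type*) [TopologicalSpace X] : Prop := ∀ x : X, ¬ HasCountableLocalBase x

/-- π-UC: every point has uncountable π-character. -/
def PiUC (X : Type*) [TopologicalSpace X] : Prop := ∀ x : X, ¬ HasCountableLocalPiBase x

/-- Sequentially discrete: every convergent sequence is eventually constant. -/
def SD (X : Type*) [TopologicalSpace X] : Prop :=
  ∀ (x : ℕ → X) (y : X), Filter.Tendsto x Filter.atTop (nhds y) →
    ∃ m : ℕ, ∀ n ≥ m, x n = x m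

/-- The Pixley–Roy hyperspace: nonempty finite subsets of `X`. -/
def PR (X : Type*) : Type _ := {F : Set X // F.Finite ∧ F.Nonempty}

/-- The basic sets `[F, U]` of the Pixley–Roy topology. -/
def PRBasic {X : Type*} (F U : Set X) : Set (PR X) :=
  {G : PR X | F ⊆ G.1 ∧ G.1 ⊆ U}

instance PR.instTopologicalSpace {X : Type*} [TopologicalSpace X] :
    TopologicalSpace (PR X) :=
  TopologicalSpace.generateFrom
    {S | ∃ (F : PR X) (U : Set X), IsOpen U ∧ S = PRBasic F.1 U}

/-- P-space: countable intersections of open sets are open. -/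
def PSpace (X : Type*) [TopologicalSpace X] : Prop :=
  ∀ U : ℕ → Set X, (∀ n, IsOpen (U n)) → IsOpen (⋂ n, U n)

/-- `Σ(Y, p, κ)`: points of `Y^κ` differing from the constant `p` on countably many coordinates. -/
def SigmaProd (Y : Type*) (p : Y) (κ : Type*) : Set (κ → Y) :=
  {x | {α : κ | x α ≠ p}.Countable}

/-- `σ(Y, p, κ)`: points of `Y^κ` differing from the constant `p` on finitely many coordinates. -/
def SmallSigmaProd (Y : Type*) (p : Y) (κ : Type*) : Set (κ → Y) :=
  {x | {α : κ | x α ≠ p}.Finite}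

section PRLemmas

variable {X : Type*} [TopologicalSpace X]

lemma PR.isOpen_basic (F : PR X) {U : Set X} (hU : IsOpen U) :
    IsOpen (PRBasic F.1 U) :=
  TopologicalSpace.isOpen_generateFrom_of_mem ⟨F, U, hU, rfl⟩

lemma PR.mem_nhds_iff {Gp : PR X} {S : Set (PR X)} :
    S ∈ 𝓝 Gp ↔ ∃ U, IsOpen U ∧ Gp.1 ⊆ U ∧ PRBasic Gp.1 U ⊆ S := by
  constructor
  · intro hS
    have heq : (𝓝 Gp : Filter (PR X)) =
        ⨅ s ∈ {s : Set (PR X) | Gp ∈ s ∧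
          s ∈ {S | ∃ (F : PR X) (U : Set X), IsOpen U ∧ S = PRBasic F.1 U}}, 𝓟 s :=
      TopologicalSpace.nhds_generateFrom
    have hdir : DirectedOn ((𝓟 : Set (PR X) → Filter (PR X)) ⁻¹'o (· ≥ ·))
        {s : Set (PR X) | Gp ∈ s ∧
          s ∈ {S | ∃ (F : PR X) (U : Set X), IsOpen U ∧ S = PRBasic F.1 U}} := by
      rintro s ⟨hGs, F₁, U₁, hU₁, rfl⟩ t ⟨hGt, F₂, U₂, hU₂, rfl⟩
      refine ⟨PRBasic Gp.1 (U₁ ∩ U₂), ⟨⟨Subset.rfl, subset_inter hGs.2 hGt.2⟩,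
        Gp, U₁ ∩ U₂, hU₁.inter hU₂, rfl⟩, ?_, ?_⟩
      · exact Filter.principal_mono.mpr fun H hH => ⟨hGs.1.trans hH.1, hH.2.trans inter_subset_left⟩
      · exact Filter.principal_mono.mpr fun H hH => ⟨hGt.1.trans hH.1, hH.2.trans inter_subset_right⟩
    have hne : {s : Set (PR X) | Gp ∈ s ∧
        s ∈ {S | ∃ (F : PR X) (U : Set X), IsOpen U ∧ S = PRBasic F.1 U}}.Nonempty :=
      ⟨PRBasic Gp.1 univ, ⟨Subset.rfl, subset_univ _⟩, Gp, univ, isOpen_univ, rfl⟩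
    rw [heq, Filter.mem_biInf_of_directed hdir hne] at hS
    obtain ⟨T, ⟨hGT, F, U, hU, rfl⟩, hTS⟩ := hS
    exact ⟨U, hU, hGT.2, fun H hH => hTS ⟨hGT.1.trans hH.1, hH.2⟩⟩
  · rintro ⟨U, hU, hGU, hsub⟩
    exact Filter.mem_of_superset ((PR.isOpen_basic Gp hU).mem_nhds ⟨Subset.rfl, hGU⟩) hsub

end PRLemmas

section GeneralLemmas

variable {X : Type*} [TopologicalSpace X]

lemma wshd_ohd (h : WSHD X) : OHD X := by
  rintro ⟨U, x, hop, hne, hcv⟩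
  obtain ⟨A, hA, xs, hxs, hdiv⟩ := h U hop hne
  have hφm : StrictMono (Nat.nth (· ∈ A)) := Nat.nth_strictMono hA
  have hφA : ∀ n, Nat.nth (· ∈ A) n ∈ A := fun n => Nat.nth_mem_of_infinite hA n
  refine hdiv _ hφm hφA x (Filter.tendsto_atTop'.mpr ?_)
  intro S hS
  obtain ⟨V, hVS, hVo, hxV⟩ := mem_nhds_iff.mp hS
  obtain ⟨m, hm⟩ := hcv V hVo hxV
  exact ⟨m, fun k hk => hVS (hm _ (hk.trans (hφm.le_apply)) (hxs _ (hφA k)))⟩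

lemma ohd_uc (h : OHD X) : UC X := by
  intro x hx
  obtain ⟨B, hBc, hBo, hBb⟩ := hx
  have hBne : B.Nonempty := by
    obtain ⟨V, hV, -⟩ := hBb univ isOpen_univ (mem_univ x); exact ⟨V, hV⟩
  obtain ⟨f, hf⟩ := hBc.exists_eq_range hBne
  have hfB : ∀ k, f k ∈ B := fun k => hf ▸ mem_range_self k
  refine h ⟨fun n => ⋂ k ∈ Finset.range (n+1), f k, x, ?_, ?_, ?_⟩
  · exact fun n => isOpen_biInter_finset fun k _ => (hBo _ (hfB k)).1
  · exact fun n => ⟨x, mem_biInter fun k _ => (hBo _ (hfB k)).2⟩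
  · intro V hV hxV
    obtain ⟨W, hWB, hWV⟩ := hBb V hV hxV
    obtain ⟨m, rfl⟩ : ∃ m, f m = W := by rw [hf] at hWB; exact hWB
    refine ⟨m, fun n hn => ?_⟩
    exact (biInter_subset_of_mem (Finset.mem_range.mpr (Nat.lt_succ_of_le hn))).trans hWV

lemma piuc_ohd (h : PiUC X) : OHD X := by
  rintro ⟨U, x, hop, hne, hcv⟩
  refine h x ⟨Set.range U, countable_range U, ?_, ?_⟩
  · rintro V ⟨n, rfl⟩; exact ⟨hop n, hne n⟩
  · intro V hV hxV
    obtain ⟨m, hm⟩ := hcv V hV hxV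
    exact ⟨U m, ⟨m, rfl⟩, hm m le_rfl⟩

lemma HasCountableLocalBase.homeo {Y : Type*} [TopologicalSpace Y] (e : X ≃ₜ Y) {x : X}
    (h : HasCountableLocalBase x) : HasCountableLocalBase (e x) := by
  obtain ⟨B, hc, ho, hb⟩ := h
  refine ⟨(fun V => e '' V) '' B, hc.image _, ?_, ?_⟩
  · rintro _ ⟨V, hV, rfl⟩
    exact ⟨(Homeomorph.isOpen_image e).mpr (ho V hV).1, ⟨x, (ho V hV).2, rfl⟩⟩
  · intro U hU hxU
    obtain ⟨V, hVB, hVsub⟩ := hb (e ⁻¹' U) (hU.preimage e.continuous) (by simpa)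
    refine ⟨e '' V, ⟨V, hVB, rfl⟩, ?_⟩
    rintro _ ⟨v, hv, rfl⟩; exact hVsub hv

lemma HasCountableLocalPiBase.homeo {Y : Type*} [TopologicalSpace Y] (e : X ≃ₜ Y) {x : X}
    (h : HasCountableLocalPiBase x) : HasCountableLocalPiBase (e x) := by
  obtain ⟨B, hc, ho, hb⟩ := h
  refine ⟨(fun V => e '' V) '' B, hc.image _, ?_, ?_⟩
  · rintro _ ⟨V, hV, rfl⟩
    exact ⟨(Homeomorph.isOpen_image e).mpr (ho V hV).1, (ho V hV).2.image e⟩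
  · intro U hU hxU
    obtain ⟨V, hVB, hVsub⟩ := hb (e ⁻¹' U) (hU.preimage e.continuous) (by simpa)
    refine ⟨e '' V, ⟨V, hVB, rfl⟩, ?_⟩
    rintro _ ⟨v, hv, rfl⟩; exact hVsub hv

lemma infinite_of_isOpen [T1Space X] (h : PiUC X) {U : Set X} (hU : IsOpen U)
    (hne : U.Nonempty) : U.Infinite := by
  by_contra hfin
  rw [Set.not_infinite] at hfin
  obtain ⟨x, hx⟩ := hne
  have hcl : IsClosed (U \ {x}) := (hfin.subset diff_subset).isClosed
  have hxeq : ({x} : Set X) = U ∩ (U \ {x})ᶜ := by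
    ext y
    simp only [mem_singleton_iff, mem_inter_iff, mem_compl_iff, mem_diff, not_and, not_not,
      mem_singleton_iff]
    constructor
    · rintro rfl; exact ⟨hx, fun _ => rfl⟩
    · rintro ⟨h1, h2⟩; exact h2 h1
  have hop : IsOpen ({x} : Set X) := by rw [hxeq]; exact hU.inter hcl.isOpen_compl
  refine h x ⟨{{x}}, countable_singleton _, ?_, ?_⟩
  · rintro V hV
    rw [mem_singleton_iff] at hV; subst hV
    exact ⟨hop, ⟨x, rfl⟩⟩
  · intro O hO hxO
    exact ⟨{x}, rfl, singleton_subset_iff.mpr hxO⟩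

end GeneralLemmas

section Crec

noncomputable def crec {α : Type*} (d : α) (step : ℕ → (ℕ → α) → α) : ℕ → ℕ → α
  | 0 => fun _ => d
  | (i+1) => Function.update (crec d step i) i (step i (crec d step i))

noncomputable def crecF {α : Type*} (d : α) (step : ℕ → (ℕ → α) → α) (i : ℕ) : α :=
  crec d step (i+1) i

lemma crecF_eq {α : Type*} (d : α) (step : ℕ → (ℕ → α) → α) (i : ℕ) :
    crecF d step i = step i (crec d step i) := by
  simp [crecF, crec]

lemma crec_eq_crecF {α : Type*} (d : α) (step : ℕ → (ℕ → α) → α) :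
    ∀ {i' i}, i < i' → crec d step i' i = crecF d step i := by
  intro i'
  induction i' with
  | zero => exact fun h => absurd h (Nat.not_lt_zero _)
  | succ k ih =>
    intro i h
    rcases Nat.lt_succ_iff_lt_or_eq.mp h with h' | rfl
    · show Function.update (crec d step k) k _ i = _
      rw [Function.update_of_ne (Nat.ne_of_lt h')]
      exact ih h'
    · rfl

end Crec

section PRBridges

variable {X : Type*} [TopologicalSpace X]

lemma HasCountableLocalBase.prSingleton {x : X} (h : HasCountableLocalBase x) :
    HasCountableLocalBase (X := PR X)
      ⟨{x}, finite_singleton x, singleton_nonempty x⟩ := by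
  obtain ⟨B, hc, ho, hb⟩ := h
  set Gx : PR X := ⟨{x}, finite_singleton x, singleton_nonempty x⟩ with hGx
  refine ⟨(fun V => PRBasic ({x} : Set X) V) '' B, hc.image _, ?_, ?_⟩
  · rintro _ ⟨V, hV, rfl⟩
    exact ⟨PR.isOpen_basic Gx (ho V hV).1, Subset.rfl, singleton_subset_iff.mpr (ho V hV).2⟩
  · intro S hS hGS
    obtain ⟨U, hU, hGU, hsub⟩ := PR.mem_nhds_iff.mp (hS.mem_nhds hGS)
    obtain ⟨V, hVB, hVU⟩ := hb U hU (singleton_subset_iff.mp hGU)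
    refine ⟨PRBasic ({x} : Set X) V, ⟨V, hVB, rfl⟩, ?_⟩
    exact fun H hH => hsub ⟨hH.1, hH.2.trans hVU⟩

lemma PR.piBase_to_base (Fp : PR X) (h : HasCountableLocalPiBase Fp) :
    HasCountableLocalBase Fp := by
  obtain ⟨B, hc, ho, hb⟩ := h
  have hBne : B.Nonempty := by
    obtain ⟨V, hV, -⟩ := hb univ isOpen_univ (mem_univ Fp); exact ⟨V, hV⟩
  obtain ⟨f, hf⟩ := hc.exists_eq_range hBne
  have hfB : ∀ n, f n ∈ B := fun n => hf ▸ mem_range_self n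
  have hpick : ∀ n, ∃ Hp : PR X, Hp ∈ f n := fun n => (ho _ (hfB n)).2
  choose Hn hHn using hpick
  have h1 : ∀ n, ∃ U, IsOpen U ∧ (Hn n).1 ⊆ U ∧ PRBasic (Hn n).1 U ⊆ f n :=
    fun n => PR.mem_nhds_iff.mp ((ho _ (hfB n)).1.mem_nhds (hHn n))
  choose U hUo hHU hUsub using h1
  refine ⟨(fun n => PRBasic Fp.1 (U n)) '' {n | Fp.1 ⊆ U n},
    (Set.to_countable _).image _, ?_, ?_⟩
  · rintro _ ⟨n, hn, rfl⟩
    exact ⟨PR.isOpen_basic Fp (hUo n), Subset.rfl, hn⟩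
  · intro S hS hFS
    obtain ⟨V, hVo, hFV, hVsub⟩ := PR.mem_nhds_iff.mp (hS.mem_nhds hFS)
    obtain ⟨W, hWB, hWsub⟩ := hb (PRBasic Fp.1 V) (PR.isOpen_basic Fp hVo) ⟨Subset.rfl, hFV⟩
    obtain ⟨n, rfl⟩ : ∃ n, f n = W := by rw [hf] at hWB; exact hWB
    have hHn_in : Hn n ∈ PRBasic Fp.1 V := hWsub (hHn n)
    have hUV : U n ⊆ V := by
      intro u hu
      have hmem : (⟨insert u (Hn n).1, ((Hn n).2.1.insert u), insert_nonempty _ _⟩ : PR X)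
          ∈ PRBasic (Hn n).1 (U n) :=
        ⟨subset_insert _ _, insert_subset hu (hHU n)⟩
      have := (hWsub (hUsub n hmem)).2
      exact this (mem_insert _ _)
    refine ⟨PRBasic Fp.1 (U n), ⟨n, hHn_in.1.trans (hHU n), rfl⟩, ?_⟩
    exact fun H hH => hVsub ⟨hH.1, hH.2.trans hUV⟩

end PRBridges

section GroupLemmas

open Pointwise

variable {G : Type*} [Group G] [TopologicalSpace G] [IsTopologicalGroup G]

lemma piBase_one_to_base_one (h : HasCountableLocalPiBase (1 : G)) :
    HasCountableLocalBase (1 : G) := by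
  obtain ⟨B, hc, ho, hb⟩ := h
  refine ⟨(fun V => V * V⁻¹) '' B, hc.image _, ?_, ?_⟩
  · rintro _ ⟨V, hV, rfl⟩
    obtain ⟨v, hv⟩ := (ho V hV).2
    refine ⟨(ho V hV).1.mul_right, ?_⟩
    have := Set.mul_mem_mul hv (Set.inv_mem_inv.mpr hv)
    rwa [mul_inv_cancel] at this
  · intro U hU h1U
    obtain ⟨V₀, hV₀o, hV₀1, hV₀U⟩ := exists_open_nhds_one_mul_subset (hU.mem_nhds h1U)
    obtain ⟨V, hVB, hVW⟩ := hb (V₀ ∩ V₀⁻¹) (hV₀o.inter hV₀o.inv)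
      ⟨hV₀1, by simpa using hV₀1⟩
    refine ⟨V * V⁻¹, ⟨V, hVB, rfl⟩, ?_⟩
    rintro _ ⟨a, ha, b, hb', rfl⟩
    have hav : a ∈ V₀ := ((hVW ha).1)
    have hbv : b ∈ V₀ := by
      have : b⁻¹ ∈ V₀⁻¹ := (hVW (Set.mem_inv.mp hb')).2
      simpa using this
    exact hV₀U (Set.mul_mem_mul hav hbv)

end GroupLemmas

section Main

open Pointwise

variable {G : Type*} [Group G] [TopologicalSpace G] [IsTopologicalGroup G] [T2Space G]

lemma piuc_to_wshd_pr (h8 : PiUC G) : WSHD (PR G) := by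
  classical
  intro S hSo hSne
  choose Gn hGn using hSne
  have h1 : ∀ n, ∃ U, IsOpen U ∧ (Gn n).1 ⊆ U ∧ PRBasic (Gn n).1 U ⊆ S n :=
    fun n => PR.mem_nhds_iff.mp ((hSo n).mem_nhds (hGn n))
  choose U hUo hFU hUS using h1
  set F : ℕ → Set G := fun n => (Gn n).1 with hF
  have hFfin : ∀ n, (F n).Finite := fun n => (Gn n).2.1
  have hFne : ∀ n, (F n).Nonempty := fun n => (Gn n).2.2
  have hUne : ∀ n, (U n).Nonempty := fun n => ⟨(hFne n).some, hFU n (hFne n).some_mem⟩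
  -- enumeration of the countable set of all points of the F n
  have hC0c : (⋃ n, F n).Countable := countable_iUnion fun n => (hFfin n).countable
  have hC0ne : (⋃ n, F n).Nonempty := ⟨(hFne 0).some, mem_iUnion.2 ⟨0, (hFne 0).some_mem⟩⟩
  obtain ⟨e, he⟩ := hC0c.exists_eq_range hC0ne
  -- step existence for the recursion constructing the separating open sets
  have hex : ∀ (i : ℕ) (prev : ℕ → Set G), ∃ W : Set G, IsOpen W ∧ e i ∈ W ∧
      ∀ n, e i ∈ F n →
        (U n \ ⋃ j ∈ Finset.range i, (if e j ∈ F n then closure (prev j) else ∅)).Nonempty →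
        ∃ x ∈ U n \ ⋃ j ∈ Finset.range i, (if e j ∈ F n then closure (prev j) else ∅),
          x ∉ closure W := by
    intro i prev
    by_contra hcon
    push_neg at hcon
    apply h8 (e i)
    refine ⟨{R | ∃ n, e i ∈ F n ∧
        R = U n \ ⋃ j ∈ Finset.range i, (if e j ∈ F n then closure (prev j) else ∅) ∧
        R.Nonempty}, ?_, ?_, ?_⟩
    · refine Set.Countable.mono ?_ (countable_range
        (fun n => U n \ ⋃ j ∈ Finset.range i, (if e j ∈ F n then closure (prev j) else ∅)))
      rintro R ⟨n, -, hR, -⟩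
      exact ⟨n, hR.symm⟩
    · rintro R ⟨n, -, rfl, hne⟩
      refine ⟨(hUo n).sdiff ?_, hne⟩
      refine isClosed_biUnion_finset fun j _ => ?_
      split
      · exact isClosed_closure
      · exact isClosed_empty
    · intro O hO hiO
      obtain ⟨V, hVnh, hVcl, hVO⟩ := exists_mem_nhds_isClosed_subset (hO.mem_nhds hiO)
      obtain ⟨n, hin, hne2, hsub⟩ := hcon (interior V) isOpen_interior
        (mem_interior_iff_mem_nhds.mpr hVnh)
      refine ⟨_, ⟨n, hin, rfl, hne2⟩, fun x hx => hVO ?_⟩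
      exact closure_minimal interior_subset hVcl (hsub x hx)
  -- the recursion
  set W' : ℕ → Set G := crecF ∅ (fun i prev => Classical.choose (hex i prev)) with hW'def
  have hprev : ∀ i, ∀ j < i,
      crec ∅ (fun i prev => Classical.choose (hex i prev)) i j = W' j :=
    fun i j hj => crec_eq_crecF _ _ hj
  have hW'spec : ∀ i, IsOpen (W' i) ∧ e i ∈ W' i ∧ ∀ n, e i ∈ F n →
      (U n \ ⋃ j ∈ Finset.range i, (if e j ∈ F n then closure (W' j) else ∅)).Nonempty →
      ∃ x ∈ U n \ ⋃ j ∈ Finset.range i, (if e j ∈ F n then closure (W' j) else ∅),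
        x ∉ closure (W' i) := by
    intro i
    have h1 : W' i = Classical.choose (hex i (crec ∅ (fun i prev => Classical.choose (hex i prev)) i)) :=
      crecF_eq _ _ i
    have h2 := Classical.choose_spec
      (hex i (crec ∅ (fun i prev => Classical.choose (hex i prev)) i))
    rw [← h1] at h2
    have hDeq : ∀ n, (⋃ j ∈ Finset.range i,
        (if e j ∈ F n then closure ((crec ∅ (fun i prev => Classical.choose (hex i prev)) i) j) else ∅))
        = ⋃ j ∈ Finset.range i, (if e j ∈ F n then closure (W' j) else ∅) := by
      intro n
      refine iUnion₂_congr fun j hj => ?_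
      rw [hprev i j (Finset.mem_range.mp hj)]
    simpa only [hDeq] using h2
  -- the invariant
  have hInv : ∀ n i,
      (U n \ ⋃ j ∈ Finset.range i, (if e j ∈ F n then closure (W' j) else ∅)).Nonempty := by
    intro n i
    induction i with
    | zero => simpa using hUne n
    | succ i ih =>
      rw [Finset.range_add_one, Finset.set_biUnion_insert]
      by_cases hi : e i ∈ F n
      · obtain ⟨x, hx, hxcl⟩ := (hW'spec i).2.2 n hi ih
        refine ⟨x, hx.1, ?_⟩
        rintro (h | h)
        · rw [if_pos hi] at h; exact hxcl h
        · exact hx.2 h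
      · obtain ⟨x, hx⟩ := ih
        refine ⟨x, hx.1, ?_⟩
        rintro (h | h)
        · rw [if_neg hi] at h; exact h
        · exact hx.2 h
  -- index function
  have hidxex : ∀ y : G, ∃ i : ℕ, y ∈ (⋃ n, F n) → e i = y := by
    intro y
    by_cases hy : y ∈ ⋃ n, F n
    · rw [he] at hy
      obtain ⟨i, hi⟩ := hy
      exact ⟨i, fun _ => hi⟩
    · exact ⟨0, fun h => absurd h hy⟩
  choose idx hidx using hidxex
  -- the sets from which we select extra points
  set Om : ℕ → Set G := fun n => U n \ ⋃ y ∈ F n, closure (W' (idx y)) with hOm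
  have hOmo : ∀ n, IsOpen (Om n) :=
    fun n => (hUo n).sdiff ((hFfin n).isClosed_biUnion fun y _ => isClosed_closure)
  have hOmne : ∀ n, (Om n).Nonempty := by
    intro n
    set i := ((hFfin n).toFinset.sup idx) + 1 with hi
    have hsub : (⋃ y ∈ F n, closure (W' (idx y))) ⊆
        ⋃ j ∈ Finset.range i, (if e j ∈ F n then closure (W' j) else ∅) := by
      intro x hx
      obtain ⟨y, hyF, hxcl⟩ := mem_iUnion₂.mp hx
      have hji : idx y < i :=
        Nat.lt_succ_of_le (Finset.le_sup ((hFfin n).mem_toFinset.mpr hyF))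
      have hey : e (idx y) = y := hidx y (mem_iUnion.2 ⟨n, hyF⟩)
      refine mem_biUnion (Finset.mem_range.mpr hji) ?_
      have : e (idx y) ∈ F n := by rw [hey]; exact hyF
      rw [if_pos this]
      exact hxcl
    exact (hInv n i).mono (diff_subset_diff_right hsub)
  have hOminf : ∀ n, (Om n).Infinite := fun n => infinite_of_isOpen h8 (hOmo n) (hOmne n)
  -- choose the extra points
  set g : ℕ → G := crecF 1 (fun n prev =>
    (((hOminf n).diff ((hFfin n).union ((Set.finite_Iio n).image prev))).nonempty).some) with hgdef
  have hgspec : ∀ n, g n ∈ Om n ∧ g n ∉ F n ∧ ∀ m < n, g n ≠ g m := by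
    intro n
    have h1 : g n = (((hOminf n).diff ((hFfin n).union ((Set.finite_Iio n).image
        (crec 1 (fun n prev => (((hOminf n).diff ((hFfin n).union
          ((Set.finite_Iio n).image prev))).nonempty).some) n)))).nonempty).some :=
      crecF_eq _ _ n
    have h2 := (((hOminf n).diff ((hFfin n).union ((Set.finite_Iio n).image
        (crec 1 (fun n prev => (((hOminf n).diff ((hFfin n).union
          ((Set.finite_Iio n).image prev))).nonempty).some) n)))).nonempty).some_mem
    rw [← h1] at h2
    refine ⟨h2.1, fun hFn => h2.2 (Or.inl hFn), fun m hm hEq => h2.2 (Or.inr ⟨m, hm, ?_⟩)⟩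
    rw [crec_eq_crecF _ _ hm]
    exact hEq.symm
  have hgU : ∀ n, g n ∈ U n := fun n => (hgspec n).1.1
  have hgW : ∀ n, ∀ y ∈ F n, g n ∉ closure (W' (idx y)) :=
    fun n y hy hmem => (hgspec n).1.2 (mem_biUnion hy hmem)
  have hginj : ∀ {m n : ℕ}, m ≠ n → g m ≠ g n := by
    intro m n hmn
    rcases Nat.lt_or_ge m n with h | h
    · exact ((hgspec n).2.2 m h).symm
    · exact (hgspec m).2.2 n (lt_of_le_of_ne h (Ne.symm hmn))
  -- the selected points of the hyperspace
  set H : ℕ → PR G := fun n => ⟨insert (g n) (F n), (hFfin n).insert _, insert_nonempty _ _⟩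
    with hHdef
  have hHS : ∀ n, H n ∈ S n :=
    fun n => hUS n ⟨subset_insert _ _, insert_subset (hgU n) (hFU n)⟩
  refine ⟨Set.univ, infinite_univ, H, fun n _ => hHS n, ?_⟩
  intro φ hφ _ K hK
  have hbasic : ∀ V : Set G, IsOpen V → K.1 ⊆ V →
      ∀ᶠ k in atTop, H (φ k) ∈ PRBasic K.1 V := by
    intro V hV hKV
    exact hK.eventually (eventually_of_mem
      ((PR.isOpen_basic K hV).mem_nhds ⟨Subset.rfl, hKV⟩) fun y hy => hy)
  -- every point of K is eventually in F (φ k)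
  have hKF : ∀ᶠ k in atTop, ∀ p ∈ K.1, p ∈ F (φ k) := by
    rw [(K.2.1).eventually_all]
    intro p hp
    have h1 : ∀ᶠ k in atTop, p ∈ (H (φ k)).1 :=
      (hbasic univ isOpen_univ (subset_univ _)).mono fun k hk => hk.1 hp
    have h2 : ∀ᶠ k in atTop, p ≠ g (φ k) := by
      by_cases hex2 : ∃ k0, p = g (φ k0)
      · obtain ⟨k0, hk0⟩ := hex2
        filter_upwards [eventually_gt_atTop k0] with k hk hpk
        have hne : φ k0 ≠ φ k := fun hEq => (Nat.ne_of_gt hk) (hφ.injective hEq).symm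
        exact hginj hne (hk0 ▸ hpk ▸ rfl)
      · exact Eventually.of_forall fun k h => hex2 ⟨k, h⟩
    filter_upwards [h1, h2] with k hk1 hk2
    have : p ∈ insert (g (φ k)) (F (φ k)) := hk1
    rcases mem_insert_iff.mp this with h | h
    · exact absurd h hk2
    · exact h
  -- separation of the points of K
  have hsep : ∀ p ∈ K.1, ∃ AB : Set G × Set G, IsOpen AB.1 ∧ IsOpen AB.2 ∧ p ∈ AB.1 ∧
      (K.1 \ {p}) ⊆ AB.2 ∧ Disjoint AB.1 AB.2 := by
    intro p hp
    have hcs : IsCompact ({p} : Set G) := isCompact_singleton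
    have hct : IsCompact (K.1 \ {p}) := (K.2.1.subset diff_subset).isCompact
    have hd0 : Disjoint ({p} : Set G) (K.1 \ {p}) :=
      disjoint_singleton_left.mpr fun h => h.2 rfl
    obtain ⟨A, B, hA, hB, hsA, htB, hd⟩ := SeparatedNhds.of_isCompact_isCompact hcs hct hd0
    exact ⟨(A, B), hA, hB, hsA rfl, htB, hd⟩
  choose! AB hABo1 hABo2 hpA hKB hABd using hsep
  have hOopen : IsOpen (⋃ p ∈ K.1, (AB p).1) := isOpen_biUnion fun p hp => hABo1 p hp
  have hKO : K.1 ⊆ ⋃ p ∈ K.1, (AB p).1 := fun p hp => mem_biUnion hp (hpA p hp)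
  have hev1 := hbasic _ hOopen hKO
  have hfreq : ∃ p ∈ K.1, ∃ᶠ k in atTop, g (φ k) ∈ (AB p).1 := by
    by_contra hcon
    push_neg at hcon
    have hev2 : ∀ᶠ k in atTop, ∀ p ∈ K.1, g (φ k) ∉ (AB p).1 :=
      (K.2.1.eventually_all).mpr fun p hp => (hcon p hp)
    obtain ⟨k, hk1, hk2⟩ := (hev1.and hev2).exists
    have : g (φ k) ∈ ⋃ p ∈ K.1, (AB p).1 := hk1.2 (mem_insert _ _)
    obtain ⟨p, hp, hgp⟩ := mem_iUnion₂.mp this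
    exact hk2 p hp hgp
  obtain ⟨p, hpK, hfr⟩ := hfreq
  have hpC0 : p ∈ ⋃ n, F n := by
    obtain ⟨k, hk⟩ := hKF.exists
    exact mem_iUnion.2 ⟨φ k, hk p hpK⟩
  have hep : e (idx p) = p := hidx p hpC0
  have hWopen : IsOpen (W' (idx p)) := (hW'spec (idx p)).1
  have hpW : p ∈ W' (idx p) := by
    have := (hW'spec (idx p)).2.1
    rwa [hep] at this
  have hVo : IsOpen ((W' (idx p) ∩ (AB p).1) ∪ (AB p).2) :=
    (hWopen.inter (hABo1 p hpK)).union (hABo2 p hpK)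
  have hKV : K.1 ⊆ (W' (idx p) ∩ (AB p).1) ∪ (AB p).2 := by
    intro q hq
    by_cases hqp : q = p
    · subst hqp; exact Or.inl ⟨hpW, hpA q hpK⟩
    · exact Or.inr (hKB p hpK ⟨hq, hqp⟩)
  have hev3 := hbasic _ hVo hKV
  obtain ⟨k, hka, hkb, hkc⟩ := (hfr.and_eventually (hev3.and hKF)).exists
  have hgV : g (φ k) ∈ (W' (idx p) ∩ (AB p).1) ∪ (AB p).2 := hkb.2 (mem_insert _ _)
  have hgnotB : g (φ k) ∉ (AB p).2 := fun h => Set.disjoint_left.mp (hABd p hpK) hka h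
  have hgW2 : g (φ k) ∈ W' (idx p) := by
    rcases hgV with h | h
    · exact h.1
    · exact absurd h hgnotB
  exact hgW (φ k) p (hkc p hpK) (subset_closure hgW2)

end Main

theorem statement18 {G : Type*} [Group G] [TopologicalSpace G] [IsTopologicalGroup G]
    [T2Space G] :
    List.TFAE [WSHD (PR G), OHD (PR G), UC (PR G), PiUC (PR G),
      OHD G, UC G, ¬ HasCountableLocalBase (1 : G),
      PiUC G, ¬ HasCountableLocalPiBase (1 : G)] := by
  tfae_have 1 → 2 := wshd_ohd
  tfae_have 2 → 3 := ohd_uc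
  tfae_have 3 → 4 := by
    intro h3 Fp hPi
    exact h3 Fp (PR.piBase_to_base Fp hPi)
  tfae_have 4 → 2 := piuc_ohd
  tfae_have 3 → 6 := by
    intro h3 x hx
    exact h3 _ hx.prSingleton
  tfae_have 5 → 6 := ohd_uc
  tfae_have 6 → 7 := fun h6 => h6 1
  tfae_have 7 → 6 := by
    intro h7 x hx
    have := hx.homeo (Homeomorph.mulLeft x⁻¹)
    rw [show (Homeomorph.mulLeft x⁻¹) x = 1 by simp] at this
    exact h7 this
  tfae_have 7 → 9 := fun h7 h9 => h7 (piBase_one_to_base_one h9)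
  tfae_have 9 → 8 := by
    intro h9 x hx
    have := hx.homeo (Homeomorph.mulLeft x⁻¹)
    rw [show (Homeomorph.mulLeft x⁻¹) x = 1 by simp] at this
    exact h9 this
  tfae_have 8 → 9 := fun h8 => h8 1
  tfae_have 8 → 5 := piuc_ohd
  tfae_have 8 → 1 := piuc_to_wshd_pr
  tfae_finish
end

section
/- Let X be a Tychonoff (completely regular Hausdorff) space and let C_p(X) denote the set of continuous real-valued functions on X endowed with the topology of pointwise convergence (the subspace topology inherited from the product space ℝ^X). Then the following statements are equivalent: (1) C_p(X) is SHD; (2) C_p(X) is WSHD; (3) C_p(X) is OHD; (4) C_p(X) is UC; (5) C_p(X) has no countable local base at the constant zero function; (6) C_p(X) is π-UC; (7) C_p(X) has no countable local π-base at the constant zero function; (8) X is uncountable. -/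
open Filter Topology Set

/-- `C_p(X)`: continuous real-valued functions with the topology of pointwise convergence. -/
def Cp (X : Type*) [TopologicalSpace X] : Type _ := {f : X → ℝ // Continuous f}

instance Cp.instTopologicalSpace {X : Type*} [TopologicalSpace X] : TopologicalSpace (Cp X) :=
  inferInstanceAs (TopologicalSpace {f : X → ℝ // Continuous f})

/-- The constant zero function as an element of `C_p(X)`. -/
def CpZero (X : Type*) [TopologicalSpace X] : Cp X := ⟨fun _ => (0 : ℝ), continuous_const⟩

section Helpers

variable {X : Type*} [TopologicalSpace X]

/-- Evaluation is continuous on `Cp X`. -/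
lemma cp_continuous_eval (x : X) : Continuous fun g : Cp X => g.1 x :=
  (continuous_apply x).comp continuous_subtype_val

/-- Basic open sets of `Cp X`. -/
def cpBasic (f : X → ℝ) (F : Finset X) (ε : ℝ) : Set (Cp X) :=
  {g : Cp X | ∀ x ∈ F, |g.1 x - f x| < ε}

lemma cp_isOpen_basic (f : X → ℝ) (F : Finset X) (ε : ℝ) :
    IsOpen (cpBasic f F ε) := by
  have h : cpBasic f F ε = ⋂ x ∈ F, {g : Cp X | |g.1 x - f x| < ε} := by
    ext g; simp [cpBasic]
  rw [h]
  refine isOpen_biInter_finset fun x _ => ?_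
  exact isOpen_lt (((cp_continuous_eval x).sub continuous_const).abs) continuous_const

lemma cp_mem_basic_self (f : Cp X) (F : Finset X) {ε : ℝ} (hε : 0 < ε) :
    f ∈ cpBasic f.1 F ε := fun x _ => by simpa using hε

lemma cp_exists_basic_subset {U : Set (Cp X)} (hU : IsOpen U) {f : Cp X} (hf : f ∈ U) :
    ∃ (F : Finset X) (ε : ℝ), 0 < ε ∧ cpBasic f.1 F ε ⊆ U := by
  obtain ⟨V, hV, rfl⟩ := isOpen_induced_iff.mp hU
  obtain ⟨I, u, hIu, hpi⟩ := isOpen_pi_iff.mp hV f.1 hf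
  have hδ : ∀ x ∈ I, ∃ δ : ℝ, 0 < δ ∧ Metric.ball (f.1 x) δ ⊆ u x := by
    intro x hx
    exact Metric.isOpen_iff.mp (hIu x hx).1 _ (hIu x hx).2
  choose! δ hδpos hδball using hδ
  rcases I.eq_empty_or_nonempty with hI | hI
  · refine ⟨I, 1, one_pos, fun g hg => ?_⟩
    refine hpi ?_
    intro x hx
    simp [hI] at hx
  · refine ⟨I, I.inf' hI δ, ?_, ?_⟩
    · rw [Finset.lt_inf'_iff]
      exact fun x hx => hδpos x hx
    · intro g hg
      refine hpi fun x hx => hδball x hx ?_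
      rw [Metric.mem_ball, Real.dist_eq]
      exact lt_of_lt_of_le (hg x hx) (Finset.inf'_le _ hx)

lemma cp_bump [T2Space X] [CompletelyRegularSpace X] (F : Finset X) {x₀ : X}
    (hx : x₀ ∉ F) : ∃ ψ : X → ℝ, Continuous ψ ∧ ψ x₀ = 1 ∧ ∀ x ∈ F, ψ x = 0 := by
  have hK : IsClosed (F : Set X) := (F : Set X).toFinite.isClosed
  obtain ⟨f, hf, hf0, hf1⟩ :=
    CompletelyRegularSpace.completely_regular x₀ (F : Set X) hK (by simpa using hx)
  refine ⟨fun x => 1 - (f x : ℝ), continuous_const.sub (continuous_subtype_val.comp hf),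
    by simp [hf0], fun x hxF => ?_⟩
  have : f x = 1 := hf1 (by simpa using hxF)
  simp [this]

/-- Inside a basic neighbourhood one can find a function with prescribed large value
at a point outside the support. -/
lemma cp_escape [T2Space X] [CompletelyRegularSpace X] (g : Cp X) (F : Finset X)
    {ε : ℝ} (hε : 0 < ε) {x₀ : X} (hx : x₀ ∉ F) (c : ℝ) :
    ∃ h : Cp X, h ∈ cpBasic g.1 F ε ∧ c ≤ h.1 x₀ := by
  obtain ⟨ψ, hψc, hψ1, hψ0⟩ := cp_bump F hx
  refine ⟨⟨fun x => g.1 x + (c + |g.1 x₀|) * ψ x, g.2.add (continuous_const.mul hψc)⟩,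
    fun x hxF => ?_, ?_⟩
  · simp [hψ0 x hxF, hε]
  · simp only [hψ1, mul_one]
    have := neg_abs_le (g.1 x₀)
    linarith

lemma cp_countable_base_of_countable [Countable X] :
    HasCountableLocalBase (CpZero X) := by
  refine ⟨range (fun p : Finset X × ℕ => cpBasic (CpZero X).1 p.1 (1 / (p.2 + 1))),
    countable_range _, ?_, ?_⟩
  · rintro V ⟨⟨F, k⟩, rfl⟩
    refine ⟨cp_isOpen_basic _ _ _, cp_mem_basic_self _ _ (by positivity)⟩
  · intro U hU h0
    obtain ⟨F, ε, hε, hsub⟩ := cp_exists_basic_subset hU h0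
    obtain ⟨k, hk⟩ := exists_nat_one_div_lt hε
    refine ⟨cpBasic (CpZero X).1 F (1 / (k + 1)), ⟨⟨F, k⟩, rfl⟩, ?_⟩
    exact fun g hg => hsub fun x hxF => lt_trans (hg x hxF) hk

/-- Translation in `Cp X` moves a countable local base to one at `0`. -/
lemma cp_base_transfer {f : Cp X} (h : HasCountableLocalBase f) :
    HasCountableLocalBase (CpZero X) := by
  obtain ⟨B, hBc, hBprop, hBbase⟩ := h
  set T : Cp X → Cp X := fun g => ⟨g.1 - f.1, g.2.sub f.2⟩ with hT
  set S : Cp X → Cp X := fun g => ⟨g.1 + f.1, g.2.add f.2⟩ with hS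
  have hTc : Continuous T := Continuous.subtype_mk
    (continuous_pi fun x => ((cp_continuous_eval x).sub continuous_const)) _
  have hSc : Continuous S := Continuous.subtype_mk
    (continuous_pi fun x => ((cp_continuous_eval x).add continuous_const)) _
  have hST : ∀ g, S (T g) = g := fun g => Subtype.ext (by simp [hS, hT])
  have hTS : ∀ g, T (S g) = g := fun g => Subtype.ext (by simp [hS, hT])
  have hTf : T f = CpZero X := Subtype.ext (by funext x; simp [hT, CpZero])
  have himg : ∀ V : Set (Cp X), T '' V = S ⁻¹' V := by
    intro V; ext g
    constructor
    · rintro ⟨a, ha, rfl⟩; simpa [hST] using ha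
    · intro hg; exact ⟨S g, hg, hTS g⟩
  refine ⟨(fun V => T '' V) '' B, hBc.image _, ?_, ?_⟩
  · rintro W ⟨V, hV, rfl⟩
    refine ⟨?_, ⟨f, (hBprop V hV).2, hTf⟩⟩
    show IsOpen (T '' V)
    rw [himg]; exact (hBprop V hV).1.preimage hSc
  · intro U hU h0
    obtain ⟨V, hV, hVsub⟩ := hBbase (T ⁻¹' U) (hU.preimage hTc) (by simpa [hTf] using h0)
    refine ⟨T '' V, ⟨V, hV, rfl⟩, ?_⟩
    rintro g ⟨a, ha, rfl⟩
    exact hVsub ha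

lemma cp_pibase_transfer {f : Cp X} (h : HasCountableLocalPiBase f) :
    HasCountableLocalPiBase (CpZero X) := by
  obtain ⟨B, hBc, hBprop, hBbase⟩ := h
  set T : Cp X → Cp X := fun g => ⟨g.1 - f.1, g.2.sub f.2⟩ with hT
  set S : Cp X → Cp X := fun g => ⟨g.1 + f.1, g.2.add f.2⟩ with hS
  have hTc : Continuous T := Continuous.subtype_mk
    (continuous_pi fun x => ((cp_continuous_eval x).sub continuous_const)) _
  have hSc : Continuous S := Continuous.subtype_mk
    (continuous_pi fun x => ((cp_continuous_eval x).add continuous_const)) _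
  have hST : ∀ g, S (T g) = g := fun g => Subtype.ext (by simp [hS, hT])
  have hTS : ∀ g, T (S g) = g := fun g => Subtype.ext (by simp [hS, hT])
  have hTf : T f = CpZero X := Subtype.ext (by funext x; simp [hT, CpZero])
  have himg : ∀ V : Set (Cp X), T '' V = S ⁻¹' V := by
    intro V; ext g
    constructor
    · rintro ⟨a, ha, rfl⟩; simpa [hST] using ha
    · intro hg; exact ⟨S g, hg, hTS g⟩
  refine ⟨(fun V => T '' V) '' B, hBc.image _, ?_, ?_⟩
  · rintro W ⟨V, hV, rfl⟩
    refine ⟨?_, (hBprop V hV).2.image T⟩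
    show IsOpen (T '' V)
    rw [himg]; exact (hBprop V hV).1.preimage hSc
  · intro U hU h0
    obtain ⟨V, hV, hVsub⟩ := hBbase (T ⁻¹' U) (hU.preimage hTc) (by simpa [hTf] using h0)
    refine ⟨T '' V, ⟨V, hV, rfl⟩, ?_⟩
    rintro g ⟨a, ha, rfl⟩
    exact hVsub ha

lemma cp_exists_point_outside (hX : Uncountable X) {S : Set X} (hS : S.Countable) :
    ∃ x₀ : X, x₀ ∉ S := by
  by_contra h
  push_neg at h
  have : (univ : Set X).Countable := hS.mono fun x _ => h x
  exact (not_countable_iff.mpr hX) (countable_univ_iff.mp this)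

lemma cp_shd_of_uncountable [T2Space X] [CompletelyRegularSpace X]
    (hX : Uncountable X) : SHD (Cp X) := by
  intro U hop hne
  choose g hg using hne
  have hbase : ∀ n, ∃ (F : Finset X) (ε : ℝ), 0 < ε ∧ cpBasic (g n).1 F ε ⊆ U n :=
    fun n => cp_exists_basic_subset (hop n) (hg n)
  choose F ε hε hsub using hbase
  obtain ⟨x₀, hx₀⟩ := cp_exists_point_outside hX
    (countable_iUnion (fun n => (F n : Set X).toFinite.countable) : (⋃ n, (F n : Set X)).Countable)
  have hx₀n : ∀ n, x₀ ∉ F n := fun n hn => hx₀ (mem_iUnion.mpr ⟨n, hn⟩)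
  have hesc : ∀ n, ∃ h : Cp X, h ∈ cpBasic (g n).1 (F n) (ε n) ∧ (n : ℝ) ≤ h.1 x₀ :=
    fun n => cp_escape (g n) (F n) (hε n) (hx₀n n) n
  choose h hmem hbig using hesc
  refine ⟨h, fun n => hsub n (hmem n), ?_⟩
  intro φ hφ y hten
  have h1 : Tendsto (fun k => (h (φ k)).1 x₀) atTop (𝓝 (y.1 x₀)) :=
    ((cp_continuous_eval x₀).tendsto y).comp hten
  have h2 : Tendsto (fun k => (h (φ k)).1 x₀) atTop atTop := by
    refine tendsto_atTop_mono (fun k => ?_) tendsto_natCast_atTop_atTop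
    exact le_trans (Nat.cast_le.mpr hφ.le_apply) (hbig (φ k))
  exact not_tendsto_nhds_of_tendsto_atTop h2 _ h1

lemma cp_not_pibase_of_uncountable [T2Space X] [CompletelyRegularSpace X]
    (hX : Uncountable X) : ¬ HasCountableLocalPiBase (CpZero X) := by
  rintro ⟨B, hBc, hBprop, hBbase⟩
  have hBne : B.Nonempty := by
    obtain ⟨V, hV, -⟩ := hBbase univ isOpen_univ (mem_univ _)
    exact ⟨V, hV⟩
  obtain ⟨f, hf⟩ := hBc.exists_eq_range hBne
  have hmem : ∀ n, f n ∈ B := fun n => hf ▸ ⟨n, rfl⟩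
  have hne : ∀ n, (f n).Nonempty := fun n => (hBprop _ (hmem n)).2
  choose g hg using hne
  have hbase : ∀ n, ∃ (F : Finset X) (ε : ℝ), 0 < ε ∧ cpBasic (g n).1 F ε ⊆ f n :=
    fun n => cp_exists_basic_subset (hBprop _ (hmem n)).1 (hg n)
  choose F ε hε hsub using hbase
  obtain ⟨x₀, hx₀⟩ := cp_exists_point_outside hX
    (countable_iUnion (fun n => (F n : Set X).toFinite.countable) : (⋃ n, (F n : Set X)).Countable)
  have hx₀n : ∀ n, x₀ ∉ F n := fun n hn => hx₀ (mem_iUnion.mpr ⟨n, hn⟩)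
  have hUopen : IsOpen {g : Cp X | |g.1 x₀| < 1} :=
    isOpen_lt ((cp_continuous_eval x₀).abs) continuous_const
  obtain ⟨V, hVB, hVsub⟩ := hBbase _ hUopen (by show |(0:ℝ)| < 1; simp)
  obtain ⟨n, rfl⟩ : ∃ n, f n = V := by rw [hf] at hVB; exact hVB
  obtain ⟨h, hmem', hbig⟩ := cp_escape (g n) (F n) (hε n) (hx₀n n) 1
  have : |h.1 x₀| < 1 := hVsub (hsub n hmem')
  have : (1 : ℝ) ≤ |h.1 x₀| := le_trans hbig (le_abs_self _)
  linarith

end Helpers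

theorem statement19 {X : Type*} [TopologicalSpace X] [CompletelyRegularSpace X] [T2Space X] :
    List.TFAE [SHD (Cp X), WSHD (Cp X), OHD (Cp X), UC (Cp X),
      ¬ HasCountableLocalBase (CpZero X),
      PiUC (Cp X), ¬ HasCountableLocalPiBase (CpZero X),
      Uncountable X] := by
  tfae_have 1 → 2 := by
    intro h U hop hne
    obtain ⟨x, hx, hns⟩ := h U hop hne
    exact ⟨univ, infinite_univ, x, fun n _ => hx n, fun φ hφ _ y => hns φ hφ y⟩
  tfae_have 2 → 3 := by
    intro h
    rintro ⟨U, x, hop, hne, hconv⟩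
    obtain ⟨A, hA, y, hy, hns⟩ := h U hop hne
    have hA' : {n | n ∈ A}.Infinite := hA
    set φ : ℕ → ℕ := Nat.nth (· ∈ A) with hφdef
    have hφ : StrictMono φ := Nat.nth_strictMono hA'
    have hφA : ∀ n, φ n ∈ A := fun n => Nat.nth_mem_of_infinite hA' n
    refine hns φ hφ hφA x ?_
    rw [tendsto_nhds]
    intro V hV hxV
    obtain ⟨m, hm⟩ := hconv V hV hxV
    filter_upwards [eventually_ge_atTop m] with k hk
    exact hm (φ k) (le_trans hk hφ.le_apply) (hy (φ k) (hφA k))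
  tfae_have 3 → 5 := by
    intro h hbase
    obtain ⟨B, hBc, hBprop, hBbase⟩ := hbase
    have hBne : B.Nonempty := by
      obtain ⟨V, hV, -⟩ := hBbase univ isOpen_univ (mem_univ _)
      exact ⟨V, hV⟩
    obtain ⟨f, hf⟩ := hBc.exists_eq_range hBne
    have hmem : ∀ n, f n ∈ B := fun n => hf ▸ ⟨n, rfl⟩
    refine h ⟨fun n => ⋂ k ∈ Finset.range (n + 1), f k, CpZero X, ?_, ?_, ?_⟩
    · exact fun n => isOpen_biInter_finset fun k _ => (hBprop _ (hmem k)).1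
    · exact fun n => ⟨CpZero X, mem_iInter₂.mpr fun k _ => (hBprop _ (hmem k)).2⟩
    · intro V hV h0
      obtain ⟨W, hWB, hWsub⟩ := hBbase V hV h0
      obtain ⟨m, rfl⟩ : ∃ m, f m = W := by rw [hf] at hWB; exact hWB
      refine ⟨m, fun n hn g hg => hWsub ?_⟩
      exact mem_iInter₂.mp hg m (Finset.mem_range.mpr (Nat.lt_succ_of_le hn))
  tfae_have 5 → 8 := by
    intro h
    by_contra hX
    rw [not_uncountable_iff] at hX
    exact h cp_countable_base_of_countable
  tfae_have 8 → 1 := fun h => cp_shd_of_uncountable h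
  tfae_have 8 → 7 := fun h => cp_not_pibase_of_uncountable h
  tfae_have 7 → 5 := by
    intro h hbase
    obtain ⟨B, hBc, hBprop, hBbase⟩ := hbase
    exact h ⟨B, hBc, fun V hV => ⟨(hBprop V hV).1, ⟨_, (hBprop V hV).2⟩⟩, hBbase⟩
  tfae_have 4 → 5 := fun h => h (CpZero X)
  tfae_have 5 → 4 := fun h f hf => h (cp_base_transfer hf)
  tfae_have 6 → 7 := fun h => h (CpZero X)
  tfae_have 7 → 6 := fun h f hf => h (cp_pibase_transfer hf)
  tfae_finish
end
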